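/- arXiv:1906.12059 — 5 statements merged into one kernel-verified Lean document; each statement's English description precedes it below -/
import Mathlib

section
/- Let f(u) = |u|^{p-1} u log^a(2+u²) with p > 1, a ∈ ℝ, and F(u) = ∫₀^u f(v) dv. Then there exists C > 0 such that for all u ∈ ℝ, |u f(u) − (p+1) F(u) − (2a/(p+1)) |u|^{p+1} log^{a-1}(2+u²)| ≤ C + C |u|^{p+1} log^{a-2}(2+u²). -/
/-!
Write `powLog s b u = |u|^s log^b(2+u²)`, so that `u f(u) = powLog (p+1) a u`, and let
`E = powLog (p+1) a - (p+1) F - (2a/(p+1)) powLog (p+1) (a-1)` be the quantity to estimate.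
Since `f` is odd, `F` and hence `E` are even. For `x > 0` the leading terms of `E'` cancel:
`E'(x) = -4a x^p log^{a-2}(2+x²) (log(2+x²) + (a-1)x²/(p+1)) / (2+x²)`,
so `|E'(x)| ≤ K x^p log^{a-2}(2+x²)` with `K = 4|a|(1 + |a-1|/(p+1))`, as `log(2+x²) ≤ 2+x²`.
Once `p log(2+x²) ≥ 2|a-2|`, i.e. beyond `x₀ = exp(|a-2|/p)`, this is at most the derivative
of `K powLog (p+1) (a-2)`; so past `x₀` the growth of `|E|` is fenced by `K powLog (p+1) (a-2)`,
while on `[0, x₀]` `E` is bounded by compactness.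
-/

open Real

lemma abs_le_abs_add_sub_of_abs_deriv_le {E E' Φ Φ' : ℝ → ℝ} {x₀ x : ℝ}
    (hE : ∀ y ≥ x₀, HasDerivAt E (E' y) y) (hΦ : ∀ y ≥ x₀, HasDerivAt Φ (Φ' y) y)
    (hE' : ∀ y ≥ x₀, |E' y| ≤ Φ' y) (hx : x₀ ≤ x) :
    |E x| ≤ Φ x + (|E x₀| - Φ x₀) :=
  image_norm_le_of_norm_deriv_right_le_deriv_boundary' (B := fun y => Φ y + (|E x₀| - Φ x₀))
    (fun y hy => (hE y hy.1).continuousAt.continuousWithinAt)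
    (fun y hy => (hE y hy.1).hasDerivWithinAt) (by simp)
    (fun y hy => ((hΦ y hy.1).add_const _).continuousAt.continuousWithinAt)
    (fun y hy => ((hΦ y hy.1).add_const _).hasDerivWithinAt) (fun y hy => hE' y hy.1)
    ⟨hx, le_rfl⟩

lemma exists_abs_le_add_of_abs_deriv_le {E E' Φ Φ' : ℝ → ℝ} {x₀ : ℝ} (hEc : Continuous E)
    (hE : ∀ y ≥ x₀, HasDerivAt E (E' y) y) (hΦ : ∀ y ≥ x₀, HasDerivAt Φ (Φ' y) y)
    (hΦ₀ : ∀ y, 0 ≤ Φ y) (hE' : ∀ y ≥ x₀, |E' y| ≤ Φ' y) :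
    ∃ M, 0 ≤ M ∧ ∀ x ≥ 0, |E x| ≤ M + Φ x := by
  obtain ⟨M, hM⟩ :=
    (isCompact_Icc (a := 0) (b := x₀)).exists_bound_of_continuousOn hEc.continuousOn
  refine ⟨max M |E x₀|, (abs_nonneg _).trans (le_max_right _ _), fun x hx => ?_⟩
  rcases le_total x x₀ with hxx₀ | hxx₀
  · have := (Real.norm_eq_abs _).symm.trans_le (hM x ⟨hx, hxx₀⟩)
    linarith [le_max_left M |E x₀|, hΦ₀ x]
  · have := abs_le_abs_add_sub_of_abs_deriv_le hE hΦ hE' hxx₀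
    linarith [le_max_right M |E x₀|, hΦ₀ x₀]

theorem intervalIntegral.integral_zero_neg_of_odd {E : Type*} [NormedAddCommGroup E]
    [NormedSpace ℝ E] {f : ℝ → E} (hf : ∀ x, f (-x) = -f x) (u : ℝ) :
    ∫ x in (0:ℝ)..-u, f x = ∫ x in (0:ℝ)..u, f x := by
  calc ∫ x in (0:ℝ)..-u, f x = -∫ x in (0:ℝ)..-u, f (-x) := by simp [hf]
    _ = ∫ x in (0:ℝ)..u, f x := by
      rw [intervalIntegral.integral_comp_neg, neg_neg, neg_zero, intervalIntegral.integral_symm,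
        neg_neg]

lemma abs_rpow_sub_one_mul_self_mul_self {p : ℝ} (hp : p + 1 ≠ 0) (u : ℝ) :
    |u| ^ (p - 1) * u * u = |u| ^ (p + 1) := by
  rw [show p + 1 = p - 1 + 2 by ring, rpow_add' (abs_nonneg u) (by convert hp using 1; ring),
    rpow_two, sq_abs, mul_assoc, sq]

lemma log_two_add_sq_pos (x : ℝ) : 0 < log (2 + x ^ 2) :=
  log_pos (by nlinarith)

lemma log_two_add_sq_le (x : ℝ) : log (2 + x ^ 2) ≤ 2 + x ^ 2 :=
  (log_le_sub_one_of_pos (by positivity)).trans (by linarith)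

lemma continuous_log_two_add_sq_rpow (b : ℝ) : Continuous fun x : ℝ => log (2 + x ^ 2) ^ b :=
  (Continuous.log (by fun_prop) fun x => by positivity).rpow_const
    fun x => .inl (log_two_add_sq_pos x).ne'

lemma two_mul_le_mul_log_two_add_sq {p c x : ℝ} (hp : 0 < p) (hx : exp (c / p) ≤ x) :
    2 * c ≤ p * log (2 + x ^ 2) := by
  have hx₀ : 0 < x := (exp_pos _).trans_le hx
  have hlog : c / p ≤ log x := (le_log_iff_exp_le hx₀).mpr hx
  have hsq : 2 * log x ≤ log (2 + x ^ 2) := by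
    calc 2 * log x = log (x ^ 2) := by rw [log_pow]; norm_num
      _ ≤ log (2 + x ^ 2) := log_le_log (by positivity) (by linarith)
  rw [div_le_iff₀ hp] at hlog
  nlinarith

noncomputable def powLog (s b x : ℝ) : ℝ := |x| ^ s * log (2 + x ^ 2) ^ b

lemma powLog_nonneg (s b x : ℝ) : 0 ≤ powLog s b x :=
  mul_nonneg (rpow_nonneg (abs_nonneg x) s) (rpow_nonneg (log_two_add_sq_pos x).le b)

lemma powLog_abs (s b x : ℝ) : powLog s b |x| = powLog s b x := by
  simp [powLog]

lemma continuous_powLog {s : ℝ} (hs : 0 ≤ s) (b : ℝ) : Continuous (powLog s b) :=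
  (continuous_abs.rpow_const fun _ => .inr hs).mul (continuous_log_two_add_sq_rpow b)

lemma hasDerivAt_powLog (s b : ℝ) {x : ℝ} (hx : 0 < x) :
    HasDerivAt (powLog s b) (x ^ (s - 1) * log (2 + x ^ 2) ^ (b - 1) *
      (s * log (2 + x ^ 2) + 2 * b * x ^ 2 / (2 + x ^ 2))) x := by
  have hD : 0 < 2 + x ^ 2 := by positivity
  have hL := log_two_add_sq_pos x
  have habs := ((hasDerivAt_abs_pos hx).rpow_const (p := s) (.inl (abs_pos.mpr hx.ne').ne'))
  have hlog := (((hasDerivAt_pow 2 x).const_add 2).log hD.ne').rpow_const (p := b) (.inl hL.ne')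
  refine (habs.mul hlog).congr_deriv ?_
  rw [abs_of_pos hx, rpow_sub_one hx.ne', rpow_sub_one hL.ne']
  field_simp
  ring

lemma rpow_mul_log_rpow_le_deriv_powLog {p b x : ℝ} (hx : 0 < x)
    (hb : 2 * |b| ≤ p * log (2 + x ^ 2)) :
    x ^ p * log (2 + x ^ 2) ^ b ≤ x ^ (p + 1 - 1) * log (2 + x ^ 2) ^ (b - 1) *
      ((p + 1) * log (2 + x ^ 2) + 2 * b * x ^ 2 / (2 + x ^ 2)) := by
  have hL := log_two_add_sq_pos x
  have hq : -(2 * |b|) ≤ 2 * b * x ^ 2 / (2 + x ^ 2) := by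
    have : |2 * b * x ^ 2 / (2 + x ^ 2)| ≤ 2 * |b| := by
      rw [abs_div, abs_mul, abs_mul, abs_of_nonneg (sq_nonneg x),
        abs_of_pos (by positivity : (0:ℝ) < 2 + x ^ 2), abs_two, div_le_iff₀ (by positivity)]
      nlinarith [abs_nonneg b]
    linarith [neg_abs_le (2 * b * x ^ 2 / (2 + x ^ 2))]
  rw [show p + 1 - 1 = p by ring, rpow_sub_one hL.ne']
  calc x ^ p * log (2 + x ^ 2) ^ b = x ^ p * log (2 + x ^ 2) ^ b * 1 := (mul_one _).symm
    _ ≤ x ^ p * log (2 + x ^ 2) ^ b *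
        (((p + 1) * log (2 + x ^ 2) + 2 * b * x ^ 2 / (2 + x ^ 2)) / log (2 + x ^ 2)) := by
      gcongr
      rw [one_le_div hL]
      linarith
    _ = _ := by ring

noncomputable def powLogDefect (p a : ℝ) (F : ℝ → ℝ) (u : ℝ) : ℝ :=
  powLog (p + 1) a u - (p + 1) * F u - 2 * a / (p + 1) * powLog (p + 1) (a - 1) u

lemma powLogDefect_abs {p a : ℝ} {F : ℝ → ℝ} (hF : ∀ u, F (-u) = F u) (u : ℝ) :
    powLogDefect p a F |u| = powLogDefect p a F u := by
  simp only [powLogDefect, powLog_abs]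
  rcases abs_choice u with h | h <;> simp only [h, hF]

lemma continuous_powLogDefect {p : ℝ} (hp : -1 ≤ p) (a : ℝ) {F : ℝ → ℝ}
    (hF : Continuous F) : Continuous (powLogDefect p a F) :=
  ((continuous_powLog (by linarith) a).sub (continuous_const.mul hF)).sub
    (continuous_const.mul (continuous_powLog (by linarith) (a - 1)))

lemma hasDerivAt_powLogDefect {p a : ℝ} {F : ℝ → ℝ} {x : ℝ} (hp : p + 1 ≠ 0)
    (hx : 0 < x) (hF : HasDerivAt F (x ^ p * log (2 + x ^ 2) ^ a) x) :
    HasDerivAt (powLogDefect p a F) (-(4 * a * x ^ p * log (2 + x ^ 2) ^ (a - 2) *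
      (log (2 + x ^ 2) + (a - 1) * x ^ 2 / (p + 1)) / (2 + x ^ 2))) x := by
  refine ((((hasDerivAt_powLog (p + 1) a hx).sub (hF.const_mul (p + 1))).sub
    ((hasDerivAt_powLog (p + 1) (a - 1) hx).const_mul (2 * a / (p + 1))))).congr_deriv ?_
  have hL := log_two_add_sq_pos x
  rw [show p + 1 - 1 = p by ring, show a - 1 - 1 = a - 2 by ring, rpow_sub_one hL.ne',
    rpow_sub hL, rpow_two]
  field_simp
  ring

lemma abs_deriv_powLogDefect_le {p a x : ℝ} (hp : -1 < p) (hx : 0 ≤ x) :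
    |-(4 * a * x ^ p * log (2 + x ^ 2) ^ (a - 2) *
      (log (2 + x ^ 2) + (a - 1) * x ^ 2 / (p + 1)) / (2 + x ^ 2))|
      ≤ 4 * |a| * (1 + |a - 1| / (p + 1)) * (x ^ p * log (2 + x ^ 2) ^ (a - 2)) := by
  have hD : 0 < 2 + x ^ 2 := by positivity
  have hL := log_two_add_sq_pos x
  set L := log (2 + x ^ 2)
  have hT : |L + (a - 1) * x ^ 2 / (p + 1)| ≤ (1 + |a - 1| / (p + 1)) * (2 + x ^ 2) := by
    have h1 : |(a - 1) * x ^ 2 / (p + 1)| ≤ |a - 1| / (p + 1) * (2 + x ^ 2) := by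
      rw [abs_div, abs_mul, abs_of_nonneg (sq_nonneg x), abs_of_pos (by linarith : 0 < p + 1),
        div_mul_eq_mul_div]
      gcongr <;> linarith
    linarith [abs_add_le L ((a - 1) * x ^ 2 / (p + 1)), abs_of_pos hL, log_two_add_sq_le x]
  calc _ = 4 * |a| * (x ^ p * L ^ (a - 2)) * |L + (a - 1) * x ^ 2 / (p + 1)| / (2 + x ^ 2) := by
        simp only [abs_neg, abs_div, abs_mul, abs_of_pos hD, abs_of_nonneg (rpow_nonneg hx p),
          abs_of_pos (rpow_pos_of_pos hL (a - 2)), abs_of_pos (four_pos : (0:ℝ) < 4)]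
        ring
    _ ≤ 4 * |a| * (x ^ p * L ^ (a - 2)) * ((1 + |a - 1| / (p + 1)) * (2 + x ^ 2))
          / (2 + x ^ 2) := by gcongr
    _ = _ := by field_simp

lemma exists_abs_powLogDefect_le {p a : ℝ} (hp : 0 < p) {F : ℝ → ℝ} (hFc : Continuous F)
    (hF : ∀ x, 0 < x → HasDerivAt F (x ^ p * log (2 + x ^ 2) ^ a) x) :
    ∃ M, 0 ≤ M ∧ ∀ x ≥ 0, |powLogDefect p a F x|
      ≤ M + 4 * |a| * (1 + |a - 1| / (p + 1)) * powLog (p + 1) (a - 2) x := by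
  set K := 4 * |a| * (1 + |a - 1| / (p + 1))
  have hK : 0 ≤ K := by positivity
  have hx₀ {x : ℝ} (hx : x ≥ exp (|a - 2| / p)) : 0 < x := (exp_pos _).trans_le hx
  exact exists_abs_le_add_of_abs_deriv_le (x₀ := exp (|a - 2| / p))
    (continuous_powLogDefect (by linarith) a hFc)
    (fun x hx => hasDerivAt_powLogDefect (by linarith) (hx₀ hx) (hF x (hx₀ hx)))
    (fun x hx => (hasDerivAt_powLog (p + 1) (a - 2) (hx₀ hx)).const_mul K)
    (fun x => mul_nonneg hK (powLog_nonneg _ _ x))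
    (fun x hx => (abs_deriv_powLogDefect_le (by linarith) (hx₀ hx).le).trans
      (mul_le_mul_of_nonneg_left (rpow_mul_log_rpow_le_deriv_powLog (hx₀ hx)
        (two_mul_le_mul_log_two_add_sq hp hx)) hK))

theorem stmt2 (p a : ℝ) (hp : 1 < p)
    (f : ℝ → ℝ) (hf : ∀ u, f u = |u| ^ (p - 1) * u * (Real.log (2 + u ^ 2)) ^ a)
    (F : ℝ → ℝ) (hF : ∀ u, F u = ∫ v in (0:ℝ)..u, f v) :
    ∃ C > 0, ∀ u : ℝ,
      |u * f u - (p + 1) * F u -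
          (2 * a / (p + 1)) * |u| ^ (p + 1) * (Real.log (2 + u ^ 2)) ^ (a - 1)| ≤
        C + C * |u| ^ (p + 1) * (Real.log (2 + u ^ 2)) ^ (a - 2) := by
  have hf_cont : Continuous f := by
    rw [funext hf]
    exact ((continuous_abs.rpow_const fun _ => .inr (by linarith)).mul continuous_id).mul
      (continuous_log_two_add_sq_rpow a)
  have hF_deriv (x : ℝ) : HasDerivAt F (f x) x := by
    rw [funext hF]
    exact (hf_cont.integral_hasStrictDerivAt 0 x).hasDerivAt
  have hF_even (u : ℝ) : F (-u) = F u := by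
    rw [hF, hF]
    exact intervalIntegral.integral_zero_neg_of_odd (fun x => by simp [hf]) u
  obtain ⟨M, hM₀, hM⟩ := exists_abs_powLogDefect_le (by linarith : 0 < p)
    (continuous_iff_continuousAt.mpr fun x => (hF_deriv x).continuousAt) fun x hx => by
      simpa only [hf, abs_of_pos hx, ← rpow_add_one hx.ne', sub_add_cancel] using hF_deriv x
  set K := 4 * |a| * (1 + |a - 1| / (p + 1))
  have hK : 0 ≤ K := by positivity
  refine ⟨M + K + 1, by positivity, fun u => ?_⟩
  have hE := hM |u| (abs_nonneg u)
  rw [powLogDefect_abs hF_even, powLog_abs] at hE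
  rw [hf, ← mul_assoc u, mul_comm u, abs_rpow_sub_one_mul_self_mul_self (by linarith),
    mul_assoc (2 * a / (p + 1)), mul_assoc (M + K + 1), ← powLog, ← powLog, ← powLog]
  change |powLogDefect p a F u| ≤ _
  nlinarith [mul_nonneg (add_nonneg hM₀ zero_le_one) (powLog_nonneg (p + 1) (a - 2) u)]
end

section
/- Let p > 1, a ∈ ℝ, A > 0, B > 0, and let v be the maximal solution of the ODE v''(t) = |v(t)|^{p-1} v(t) log^a(2 + v(t)²) with v(0) = A and v'(0) = B. Then the maximal existence time T of v is finite (the solution blows up in finite time). -/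
/-!
Along the solution, `(v v')' = v'² + v f(v) ≥ 0`, so `v v' ≥ AB > 0`: `v` stays positive, `v'`
increases, and `v ≥ A + B t → ∞`. For `v ≥ 1` the logarithmic factor costs at most `v^(-(p-1)/2)`,
so `v'' ≥ c v^q` with `q = (p+1)/2 > 1`. The energy `v'² - 2c/(q+1) v^(q+1)` is then nondecreasing,
which eventually gives `v' ≥ c' v^r` with `r = (q+1)/2 > 1`. Finally `v^(1-r) + (r-1) c' t` is
nonincreasing although it exceeds `(r-1) c' t`, which is absurd.
-/

open Real Set Filter

section Monotonicity

variable {f f' : ℝ → ℝ} {t₀ : ℝ}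

lemma monotoneOn_Ici_of_hasDerivAt (hf : ∀ t ≥ t₀, HasDerivAt f (f' t) t)
    (hf' : ∀ t > t₀, 0 ≤ f' t) : MonotoneOn f (Ici t₀) :=
  monotoneOn_of_hasDerivWithinAt_nonneg (convex_Ici t₀)
    (fun t ht => (hf t ht).continuousAt.continuousWithinAt)
    (fun t ht => (hf t (le_of_lt (by simpa using ht))).hasDerivWithinAt)
    (fun t ht => hf' t (by simpa using ht))

lemma antitoneOn_Ici_of_hasDerivAt (hf : ∀ t ≥ t₀, HasDerivAt f (f' t) t)
    (hf' : ∀ t > t₀, f' t ≤ 0) : AntitoneOn f (Ici t₀) :=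
  antitoneOn_of_hasDerivWithinAt_nonpos (convex_Ici t₀)
    (fun t ht => (hf t ht).continuousAt.continuousWithinAt)
    (fun t ht => (hf t (le_of_lt (by simpa using ht))).hasDerivWithinAt)
    (fun t ht => hf' t (by simpa using ht))

end Monotonicity

section SecondOrder

variable {v D F : ℝ → ℝ} {t₀ : ℝ}

lemma pos_of_hasDerivAt_of_mul_nonneg (hv : ∀ t ≥ t₀, HasDerivAt v (D t) t)
    (hD : ∀ t ≥ t₀, HasDerivAt D (F t) t) (hvF : ∀ t ≥ t₀, 0 ≤ v t * F t)
    (hv₀ : 0 < v t₀) (hD₀ : 0 < D t₀) : ∀ t ≥ t₀, 0 < v t := by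
  have hmono : MonotoneOn (fun t => v t * D t) (Ici t₀) :=
    monotoneOn_Ici_of_hasDerivAt (fun t ht => (hv t ht).mul (hD t ht))
      (fun t ht => by nlinarith [hvF t ht.le, sq_nonneg (D t)])
  intro t ht
  by_contra! hvt
  obtain ⟨s, hs, hvs⟩ : (0 : ℝ) ∈ v '' Icc t₀ t :=
    intermediate_value_Icc' ht (fun s hs => (hv s hs.1).continuousAt.continuousWithinAt)
      ⟨hvt, hv₀.le⟩
  have := hmono self_mem_Ici hs.1 hs.1
  simp only [hvs, zero_mul] at this
  nlinarith [mul_pos hv₀ hD₀]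

lemma tendsto_atTop_of_le_deriv {B : ℝ} (hB : 0 < B) (hv : ∀ t ≥ t₀, HasDerivAt v (D t) t)
    (hD : ∀ t ≥ t₀, B ≤ D t) : Tendsto v atTop atTop := by
  have hmono : MonotoneOn (fun t => v t - B * t) (Ici t₀) :=
    monotoneOn_Ici_of_hasDerivAt (fun t ht => (hv t ht).sub ((hasDerivAt_id t).const_mul B))
      (fun t ht => by simpa using hD t ht.le)
  refine tendsto_atTop_mono' atTop ?_
    (tendsto_atTop_add_const_left _ (v t₀ - B * t₀) (tendsto_id.const_mul_atTop hB))
  filter_upwards [eventually_ge_atTop t₀] with t ht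
  have := hmono self_mem_Ici ht ht
  change v t₀ - B * t₀ + B * t ≤ v t
  linarith

lemma eventually_const_mul_rpow_le_deriv {c q : ℝ} (hc : 0 < c) (hq : 0 < q + 1)
    (hv : ∀ᶠ t in atTop, HasDerivAt v (D t) t) (hD : ∀ᶠ t in atTop, HasDerivAt D (F t) t)
    (hD_nonneg : ∀ᶠ t in atTop, 0 ≤ D t) (hF : ∀ᶠ t in atTop, c * v t ^ q ≤ F t)
    (hvtop : Tendsto v atTop atTop) :
    ∃ c' > 0, ∀ᶠ t in atTop, c' * v t ^ ((q + 1) / 2) ≤ D t := by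
  set k := c / (q + 1)
  have hk : 0 < k := div_pos hc hq
  obtain ⟨t₀, ht₀⟩ := eventually_atTop.1
    (hv.and (hD.and (hD_nonneg.and (hF.and (hvtop.eventually_gt_atTop 0)))))
  let E t := D t ^ 2 - 2 * k * v t ^ (q + 1)
  have hE : MonotoneOn E (Ici t₀) := by
    refine monotoneOn_Ici_of_hasDerivAt (f' := fun t => 2 * D t * (F t - c * v t ^ q))
      (fun t ht => ?_) (fun t ht => ?_)
    · obtain ⟨hvt, hDt, -, -, hpos⟩ := ht₀ t ht
      refine ((hDt.fun_pow 2).sub ((hvt.rpow_const (p := q + 1) (Or.inl hpos.ne')).const_mul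
        (2 * k))).congr_deriv ?_
      simp only [k, add_sub_cancel_right]
      field_simp
      ring
    · obtain ⟨-, -, hDt, hFt, -⟩ := ht₀ t ht.le
      exact mul_nonneg (by positivity) (sub_nonneg.2 hFt)
  refine ⟨√k, sqrt_pos.2 hk, ?_⟩
  filter_upwards [eventually_ge_atTop t₀,
    ((tendsto_rpow_atTop hq).comp hvtop).eventually_ge_atTop (-E t₀ / k)] with t ht hlarge
  obtain ⟨-, -, hDt, -, hpos⟩ := ht₀ t ht
  have hEt : E t₀ ≤ E t := hE self_mem_Ici ht ht
  have hsq : (v t ^ ((q + 1) / 2)) ^ 2 = v t ^ (q + 1) := by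
    rw [← rpow_natCast, ← rpow_mul hpos.le]
    norm_num
  rw [← sq_le_sq₀ (by positivity) hDt, mul_pow, sq_sqrt hk.le, hsq]
  rw [Function.comp_apply, div_le_iff₀ hk] at hlarge
  simp only [E] at hEt
  nlinarith

lemma false_of_const_mul_rpow_le_deriv {c r : ℝ} (hc : 0 < c) (hr : 1 < r)
    (hv : ∀ᶠ t in atTop, HasDerivAt v (D t) t) (hpos : ∀ᶠ t in atTop, 0 < v t)
    (hD : ∀ᶠ t in atTop, c * v t ^ r ≤ D t) : False := by
  obtain ⟨t₀, ht₀⟩ := eventually_atTop.1 (hv.and (hpos.and hD))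
  let W t := v t ^ (1 - r) + (r - 1) * c * t
  have hW : AntitoneOn W (Ici t₀) := by
    refine antitoneOn_Ici_of_hasDerivAt
      (f' := fun t => D t * (1 - r) * v t ^ (1 - r - 1) + (r - 1) * c) (fun t ht => ?_)
      (fun t ht => ?_)
    · exact ((ht₀ t ht).1.rpow_const (Or.inl (ht₀ t ht).2.1.ne')).add
        (by simpa using (hasDerivAt_id t).const_mul ((r - 1) * c))
    · obtain ⟨-, hvt, hDt⟩ := ht₀ t ht.le
      have hinv : v t ^ r * v t ^ (1 - r - 1) = 1 := by
        rw [← rpow_add hvt]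
        simp
      have key : c ≤ D t * v t ^ (1 - r - 1) := by
        calc c = c * v t ^ r * v t ^ (1 - r - 1) := by rw [mul_assoc, hinv, mul_one]
          _ ≤ D t * v t ^ (1 - r - 1) :=
            mul_le_mul_of_nonneg_right hDt (rpow_pos_of_pos hvt _).le
      nlinarith
  obtain ⟨n, hn⟩ := exists_nat_gt (v t₀ ^ (1 - r) / ((r - 1) * c))
  have hlin : 0 < (r - 1) * c := mul_pos (by linarith) hc
  have hpos₁ := rpow_pos_of_pos (ht₀ (t₀ + n) (by simp)).2.1 (1 - r)
  have := hW self_mem_Ici (show t₀ ≤ t₀ + n by simp) (by simp)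
  rw [div_lt_iff₀ hlin] at hn
  simp only [W] at this hn
  nlinarith

end SecondOrder

lemma exists_pos_mul_rpow_neg_le_log_two_add_sq_rpow (a : ℝ) {ε : ℝ} (hε : 0 < ε) :
    ∃ c > 0, ∀ x ≥ (1 : ℝ), c * x ^ (-ε) ≤ log (2 + x ^ 2) ^ a := by
  rcases le_or_gt 0 a with ha | ha
  · refine ⟨log 2 ^ a, rpow_pos_of_pos (log_pos one_lt_two) a, fun x hx => ?_⟩
    calc log 2 ^ a * x ^ (-ε) ≤ log 2 ^ a * 1 := by
          gcongr
          exact rpow_le_one_of_one_le_of_nonpos hx (by linarith)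
      _ ≤ log (2 + x ^ 2) ^ a := by
          rw [mul_one]
          gcongr
          nlinarith
  · -- `log y ≤ y^δ / δ` with `δ` chosen so that `(x^(2δ))^a = x^(-ε)`
    set δ := ε / (-2 * a)
    have hδ : 0 < δ := div_pos hε (by linarith)
    set K := 3 ^ δ / δ
    have hK : 0 < K := div_pos (by positivity) hδ
    refine ⟨K ^ a, rpow_pos_of_pos hK a, fun x hx => ?_⟩
    have hx₀ : 0 < x := by linarith
    have hlog_le : log (2 + x ^ 2) ≤ K * x ^ (2 * δ) :=
      calc log (2 + x ^ 2) ≤ (2 + x ^ 2) ^ δ / δ := log_le_rpow_div (by positivity) hδ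
        _ ≤ (3 * x ^ 2) ^ δ / δ := by gcongr; nlinarith
        _ = K * x ^ (2 * δ) := by
          rw [mul_rpow (by norm_num) (by positivity), ← rpow_natCast_mul hx₀.le]
          push_cast
          ring
    calc K ^ a * x ^ (-ε) = (K * x ^ (2 * δ)) ^ a := by
          rw [mul_rpow hK.le (by positivity), ← rpow_mul hx₀.le]
          congr 2
          simp only [δ]
          field_simp [ha.ne]
      _ ≤ log (2 + x ^ 2) ^ a :=
          rpow_le_rpow_of_nonpos (log_pos (by nlinarith)) hlog_le ha.le

noncomputable def logPowerNonlinearity (p a x : ℝ) : ℝ := |x| ^ (p - 1) * x * log (2 + x ^ 2) ^ a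

namespace logPowerNonlinearity

variable {p a x : ℝ}

lemma eq_rpow_mul (hx : 0 < x) :
    logPowerNonlinearity p a x = x ^ p * log (2 + x ^ 2) ^ a := by
  rw [logPowerNonlinearity, abs_of_pos hx, ← rpow_add_one hx.ne', sub_add_cancel]

lemma pos (hx : 0 < x) : 0 < logPowerNonlinearity p a x := by
  rw [eq_rpow_mul hx]
  have : 0 < log (2 + x ^ 2) := log_pos (by nlinarith)
  positivity

lemma self_mul_nonneg : 0 ≤ x * logPowerNonlinearity p a x := by
  have : 0 < log (2 + x ^ 2) := log_pos (by nlinarith [sq_nonneg x])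
  have : x * logPowerNonlinearity p a x = |x| ^ (p - 1) * x ^ 2 * log (2 + x ^ 2) ^ a := by
    rw [logPowerNonlinearity]
    ring
  rw [this]
  positivity

lemma exists_pos_mul_rpow_le (a : ℝ) {ε : ℝ} (hε : 0 < ε) :
    ∃ c > 0, ∀ x ≥ (1 : ℝ), c * x ^ (p - ε) ≤ logPowerNonlinearity p a x := by
  obtain ⟨c, hc, hlog⟩ := exists_pos_mul_rpow_neg_le_log_two_add_sq_rpow a hε
  refine ⟨c, hc, fun x hx => ?_⟩
  have hx₀ : 0 < x := by linarith
  rw [eq_rpow_mul hx₀, sub_eq_add_neg, rpow_add hx₀]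
  calc c * (x ^ p * x ^ (-ε)) = x ^ p * (c * x ^ (-ε)) := by ring
    _ ≤ x ^ p * log (2 + x ^ 2) ^ a := by gcongr; exact hlog x hx

end logPowerNonlinearity

/-- The ODE `v'' = |v|^{p-1} v log^a(2+v²)` with positive initial data and velocity
has no global solution on `[0,∞)`: the maximal existence time is finite. -/
theorem stmt9 (p a A B : ℝ) (hp : 1 < p) (hA : 0 < A) (hB : 0 < B) :
    ¬ ∃ v : ℝ → ℝ, v 0 = A ∧ deriv v 0 = B ∧
      ∀ t : ℝ, 0 ≤ t →
        HasDerivAt v (deriv v t) t ∧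
        HasDerivAt (deriv v)
          (|v t| ^ (p - 1) * v t * (Real.log (2 + (v t) ^ 2)) ^ a) t := by
  rintro ⟨v, hv₀, hD₀, hODE⟩
  have hv : ∀ t ≥ (0 : ℝ), HasDerivAt v (deriv v t) t := fun t ht => (hODE t ht).1
  have hD : ∀ t ≥ (0 : ℝ), HasDerivAt (deriv v) (logPowerNonlinearity p a (v t)) t :=
    fun t ht => (hODE t ht).2
  have hpos := pos_of_hasDerivAt_of_mul_nonneg hv hD
    (fun t _ => logPowerNonlinearity.self_mul_nonneg) (hv₀ ▸ hA) (hD₀ ▸ hB)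
  have hDB : ∀ t ≥ (0 : ℝ), B ≤ deriv v t := fun t ht => hD₀ ▸
    monotoneOn_Ici_of_hasDerivAt hD (fun s hs => (logPowerNonlinearity.pos (hpos s hs.le)).le)
      self_mem_Ici ht ht
  have hvtop := tendsto_atTop_of_le_deriv hB hv hDB
  obtain ⟨c, hc, hf⟩ :=
    logPowerNonlinearity.exists_pos_mul_rpow_le (p := p) a (ε := (p - 1) / 2) (by linarith)
  obtain ⟨c', hc', hDv⟩ := eventually_const_mul_rpow_le_deriv hc (by linarith)
    (eventually_atTop.2 ⟨0, hv⟩) (eventually_atTop.2 ⟨0, hD⟩)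
    (eventually_atTop.2 ⟨0, fun t ht => hB.le.trans (hDB t ht)⟩)
    ((hvtop.eventually_ge_atTop 1).mono fun t ht => hf (v t) ht) hvtop
  exact false_of_const_mul_rpow_le_deriv hc' (by linarith) (eventually_atTop.2 ⟨0, hv⟩)
    (hvtop.eventually_gt_atTop 0) hDv
end

section
/- Let p > 1, a ∈ ℝ, and let v be the solution of v'' = |v|^{p-1} v log^a(2+v²) with v(0) = A > 0, v'(0) = B > 0, blowing up at time T < ∞. Then v(t) ∼ κ_a (T−t)^{−2/(p−1)} |log(T−t)|^{−a/(p−1)} as t → T, where κ_a = (2^{1−2a}(p+1)/(p−1)^{2−a})^{1/(p−1)}. -/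
/-!
Write `N(y) = |y|^{p-1} y log^a(2 + y²)`, so that `N(y) ~ 2^a y^p log^a y` as `y → ∞`. Near the
blow-up time `v → ∞` and `v'' = N(v) > 0`, so `v' > 0`. The derivatives of `(v')²` and of
`k² v^{p+1} log^a v`, with `k² = 2^{a+1}/(p+1)`, are `2 v' N(v)` and an equivalent expression, so an
`∞/∞` form of L'Hôpital's rule gives `v' ~ k v^{(p+1)/2} log^{a/2} v`. Hence
`w = v^{-(p-1)/2} log^{-a/2} v` satisfies `w → 0` and `w' → -c` with `c = (p-1)k/2`, and L'Hôpital's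
rule gives `w ~ c (T - t)`. Taking logarithms, `log v ~ 2|log (T - t)|/(p-1)`; substituting this
back into `v^{(p-1)/2} log^{a/2} v ~ (c (T - t))⁻¹` yields the profile, with constant
`c^{-2/(p-1)} ((p-1)/2)^{a/(p-1)} = κ_a`.
-/

open Real Set Filter Topology Asymptotics

theorem Asymptotics.IsEquivalent.rpow_of_eventually_nonneg {α : Type*} {l : Filter α}
    {u v : α → ℝ} (hv : ∀ᶠ x in l, 0 ≤ v x) (h : u ~[l] v) (r : ℝ) :
    (fun x => u x ^ r) ~[l] fun x => v x ^ r := by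
  have hv' : v =ᶠ[l] fun x => max (v x) 0 := hv.mono fun x hx => (max_eq_left hx).symm
  refine ((h.congr_right hv').rpow (fun x => le_max_right (v x) 0) (r := r)).congr_right ?_
  filter_upwards [hv] with x hx
  simp only [Pi.pow_apply, max_eq_left hx]

/-- L'Hôpital's rule for the form `∞/∞`, stated with asymptotic equivalence. -/
theorem isEquivalent_nhdsLT_of_hasDerivAt {f g f' g' : ℝ → ℝ} {b : ℝ}
    (hf : ∀ᶠ x in 𝓝[<] b, HasDerivAt f (f' x) x)
    (hg : ∀ᶠ x in 𝓝[<] b, HasDerivAt g (g' x) x) (hg' : ∀ᶠ x in 𝓝[<] b, 0 < g' x)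
    (hg_top : Tendsto g (𝓝[<] b) atTop)
    (h : f' ~[𝓝[<] b] g') : f ~[𝓝[<] b] g := by
  refine isLittleO_iff.2 fun ε hε => ?_
  obtain ⟨x₀, hx₀, hsub⟩ := mem_nhdsLT_iff_exists_Ico_subset.1
    (hf.and (hg.and (hg'.and (h.isLittleO.def (half_pos hε)))))
  have hfence : ∀ x ∈ Ico x₀ b,
      ‖(f x - g x) - (f x₀ - g x₀)‖ ≤ ε / 2 * (g x - g x₀) := by
    intro x hx
    have hd : ∀ y ∈ Icc x₀ x, HasDerivAt f (f' y) y ∧ HasDerivAt g (g' y) y ∧ 0 < g' y ∧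
        ‖(f' - g') y‖ ≤ ε / 2 * ‖g' y‖ := fun y hy => hsub ⟨hy.1, hy.2.trans_lt hx.2⟩
    refine image_norm_le_of_norm_deriv_right_le_deriv_boundary'
      (f := fun y => (f y - g y) - (f x₀ - g x₀)) (f' := fun y => f' y - g' y)
      (B := fun y => ε / 2 * (g y - g x₀)) (B' := fun y => ε / 2 * g' y) ?_ ?_ (by simp) ?_ ?_
      ?_ ⟨hx.1, le_rfl⟩
    · exact fun y hy =>
        (((hd y hy).1.sub (hd y hy).2.1).sub_const _).continuousAt.continuousWithinAt
    · exact fun y hy => (((hd y (Ico_subset_Icc_self hy)).1.sub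
        (hd y (Ico_subset_Icc_self hy)).2.1).sub_const _).hasDerivWithinAt
    · exact fun y hy =>
        (((hd y hy).2.1.sub_const _).const_mul _).continuousAt.continuousWithinAt
    · exact fun y hy =>
        (((hd y (Ico_subset_Icc_self hy)).2.1.sub_const _).const_mul _).hasDerivWithinAt
    · intro y hy
      obtain ⟨-, -, hpos, hle⟩ := hd y (Ico_subset_Icc_self hy)
      simpa [Real.norm_eq_abs, abs_of_pos hpos] using hle
  have hconst : ∀ᶠ x in 𝓝[<] b, ‖f x₀ - g x₀‖ + ε / 2 * |g x₀| ≤ ε / 2 * g x :=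
    (hg_top.const_mul_atTop (half_pos hε)).eventually_ge_atTop _
  filter_upwards [hconst, hg_top.eventually_gt_atTop 0, Ico_mem_nhdsLT hx₀] with x hx hgx hxI
  have h₁ := hfence x hxI
  have h₂ := abs_sub_abs_le_abs_sub (f x - g x) (f x₀ - g x₀)
  have h₃ := neg_abs_le (g x₀)
  simp only [Pi.sub_apply, Real.norm_eq_abs, abs_of_pos hgx] at h₁ hx ⊢
  nlinarith

theorem eventually_deriv_pos_of_tendsto_atTop {v v' v'' : ℝ → ℝ} {b : ℝ}
    (hv : ∀ᶠ t in 𝓝[<] b, HasDerivAt v (v' t) t)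
    (hv' : ∀ᶠ t in 𝓝[<] b, HasDerivAt v' (v'' t) t)
    (hv'' : ∀ᶠ t in 𝓝[<] b, 0 ≤ v'' t) (hv_top : Tendsto v (𝓝[<] b) atTop) :
    ∀ᶠ t in 𝓝[<] b, 0 < v' t := by
  obtain ⟨t₀, ht₀, hsub⟩ := mem_nhdsLT_iff_exists_Ico_subset.1 (hv.and (hv'.and hv''))
  have hmono : MonotoneOn v' (Ico t₀ b) := by
    refine monotoneOn_of_hasDerivWithinAt_nonneg (f' := v'') (convex_Ico t₀ b)
      (fun t ht => (hsub ht).2.1.continuousAt.continuousWithinAt) (fun t ht => ?_) fun t ht => ?_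
    · exact (hsub (interior_subset ht)).2.1.hasDerivWithinAt
    · exact (hsub (interior_subset ht)).2.2
  obtain ⟨t₁, ht₁, hpos⟩ : ∃ t₁ ∈ Ico t₀ b, 0 < v' t₁ := by
    by_contra! hneg
    have hanti : AntitoneOn v (Ico t₀ b) :=
      antitoneOn_of_hasDerivWithinAt_nonpos (convex_Ico t₀ b)
        (fun t ht => (hsub ht).1.continuousAt.continuousWithinAt)
        (fun t ht => (hsub (interior_subset ht)).1.hasDerivWithinAt)
        fun t ht => hneg t (interior_subset ht)
    obtain ⟨t, hvt, ht⟩ := ((hv_top.eventually_gt_atTop (v t₀)).and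
      (Ico_mem_nhdsLT ht₀)).exists
    exact (hanti ⟨le_rfl, ht₀⟩ ht ht.1).not_gt hvt
  filter_upwards [Ico_mem_nhdsLT ht₁.2] with t ht
  exact hpos.trans_le (hmono ⟨ht₁.1, ht₁.2⟩ ⟨ht₁.1.trans ht.1, ht.2⟩ ht.1)

theorem hasDerivAt_rpow_mul_log_rpow (s c : ℝ) {y : ℝ} (hy : 1 < y) :
    HasDerivAt (fun y => y ^ s * log y ^ c)
      (y ^ (s - 1) * log y ^ c * (s + c / log y)) y := by
  have hy0 : 0 < y := one_pos.trans hy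
  have hlog : 0 < log y := Real.log_pos hy
  have := (Real.hasDerivAt_rpow_const (p := s) (Or.inl hy0.ne')).mul
    ((Real.hasDerivAt_rpow_const (p := c) (Or.inl hlog.ne')).comp y (Real.hasDerivAt_log hy0.ne'))
  refine this.congr_deriv ?_
  simp only [Function.comp_apply]
  rw [Real.rpow_sub_one hy0.ne', Real.rpow_sub_one hlog.ne']
  field_simp

theorem tendsto_rpow_neg_mul_log_rpow_atTop (c : ℝ) {s : ℝ} (hs : 0 < s) :
    Tendsto (fun y : ℝ => y ^ (-s) * log y ^ c) atTop (𝓝 0) := by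
  refine (isLittleO_log_rpow_rpow_atTop c hs).tendsto_div_nhds_zero.congr' ?_
  filter_upwards [eventually_gt_atTop (0:ℝ)] with y hy
  rw [Real.rpow_neg hy.le, div_eq_inv_mul]

theorem tendsto_rpow_mul_log_rpow_atTop (c : ℝ) {s : ℝ} (hs : 0 < s) :
    Tendsto (fun y : ℝ => y ^ s * log y ^ c) atTop atTop := by
  have hpos : ∀ᶠ y : ℝ in atTop, 0 < y ^ (-s) * log y ^ (-c) := by
    filter_upwards [eventually_gt_atTop 1] with y hy
    have := Real.log_pos hy
    positivity
  refine (tendsto_nhdsWithin_of_tendsto_nhds_of_eventually_within _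
    (tendsto_rpow_neg_mul_log_rpow_atTop (-c) hs) hpos).inv_tendsto_nhdsGT_zero.congr' ?_
  filter_upwards [eventually_gt_atTop 1] with y hy
  rw [Pi.inv_apply, mul_inv, ← Real.rpow_neg (zero_le_one.trans hy.le),
    ← Real.rpow_neg (Real.log_pos hy).le, neg_neg, neg_neg]

noncomputable def nonlinearity (p a y : ℝ) : ℝ := |y| ^ (p - 1) * y * log (2 + y ^ 2) ^ a

theorem nonlinearity_of_pos (p a : ℝ) {y : ℝ} (hy : 0 < y) :
    nonlinearity p a y = y ^ p * log (2 + y ^ 2) ^ a := by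
  rw [nonlinearity, abs_of_pos hy, Real.rpow_sub_one hy.ne', div_mul_cancel₀ _ hy.ne']

theorem nonlinearity_pos (p a : ℝ) {y : ℝ} (hy : 0 < y) : 0 < nonlinearity p a y := by
  have : 0 < log (2 + y ^ 2) := Real.log_pos (by nlinarith)
  rw [nonlinearity_of_pos p a hy]
  positivity

theorem nonlinearity_isEquivalent_atTop (p a : ℝ) :
    nonlinearity p a ~[atTop] fun y => 2 ^ a * (y ^ p * log y ^ a) := by
  have hlog : (fun y : ℝ => log (2 + y ^ 2)) ~[atTop] fun y => 2 * log y := by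
    refine ((IsEquivalent.refl.const_add_of_norm_tendsto_atTop ?_).log
      (tendsto_pow_atTop two_ne_zero)).congr_right ?_
    · exact tendsto_norm_atTop_atTop.comp (tendsto_pow_atTop two_ne_zero)
    · filter_upwards with y
      rw [Real.log_pow]
      push_cast
      ring
  have hpow := (hlog.rpow_of_eventually_nonneg (Filter.eventually_ge_atTop 1 |>.mono
    fun y hy => mul_nonneg zero_le_two (Real.log_nonneg hy)) a)
  refine ((IsEquivalent.refl (u := fun y : ℝ => y ^ p)).mul hpow).congr_left ?_ |>.congr_right ?_
  · filter_upwards [eventually_gt_atTop 0] with y hy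
    rw [Pi.mul_apply, nonlinearity_of_pos p a hy]
  · filter_upwards [eventually_ge_atTop 1] with y hy
    rw [Pi.mul_apply, Real.mul_rpow zero_le_two (Real.log_nonneg hy)]
    ring

structure IsBlowupSolution (p a T : ℝ) (v : ℝ → ℝ) : Prop where
  ode : ∀ᶠ t in 𝓝[<] T, HasDerivAt v (deriv v t) t ∧
    HasDerivAt (deriv v) (nonlinearity p a (v t)) t
  tendsto_atTop : Tendsto v (𝓝[<] T) atTop

namespace IsBlowupSolution

variable {p a T : ℝ} {v : ℝ → ℝ}

theorem eventually_deriv_pos (hv : IsBlowupSolution p a T v) :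
    ∀ᶠ t in 𝓝[<] T, 0 < deriv v t :=
  eventually_deriv_pos_of_tendsto_atTop (hv.ode.mono fun _ h => h.1) (hv.ode.mono fun _ h => h.2)
    ((hv.tendsto_atTop.eventually_gt_atTop 0).mono fun _ h => (nonlinearity_pos p a h).le)
    hv.tendsto_atTop

theorem deriv_sq_isEquivalent (hp : 1 < p) (hv : IsBlowupSolution p a T v) :
    (fun t => deriv v t ^ 2) ~[𝓝[<] T]
      fun t => 2 ^ (a + 1) / (p + 1) * (v t ^ (p + 1) * log (v t) ^ a) := by
  have hv1 := hv.tendsto_atTop.eventually_gt_atTop 1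
  have hf : ∀ᶠ t in 𝓝[<] T, HasDerivAt (fun t => deriv v t ^ 2)
      (2 * deriv v t * nonlinearity p a (v t)) t := by
    filter_upwards [hv.ode] with t ht
    exact (ht.2.pow 2).congr_deriv (by push_cast; ring)
  have hg : ∀ᶠ t in 𝓝[<] T, HasDerivAt
      (fun t => 2 ^ (a + 1) / (p + 1) * (v t ^ (p + 1) * log (v t) ^ a))
      (2 ^ (a + 1) / (p + 1) *
        (v t ^ p * log (v t) ^ a * (p + 1 + a / log (v t)) * deriv v t)) t := by
    filter_upwards [hv.ode, hv1] with t ht h1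
    simpa using ((hasDerivAt_rpow_mul_log_rpow (p + 1) a h1).comp t ht.1).const_mul
      (2 ^ (a + 1) / (p + 1))
  have hlim : Tendsto (fun t => p + 1 + a / log (v t)) (𝓝[<] T) (𝓝 (p + 1)) := by
    simpa using tendsto_const_nhds.add
      (tendsto_const_nhds.div_atTop (Real.tendsto_log_atTop.comp hv.tendsto_atTop))
  have hequiv : (fun t => 2 * deriv v t * nonlinearity p a (v t)) ~[𝓝[<] T]
      fun t => 2 ^ (a + 1) / (p + 1) *
        (v t ^ p * log (v t) ^ a * (p + 1 + a / log (v t)) * deriv v t) := by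
    have hN := (nonlinearity_isEquivalent_atTop p a).comp_tendsto hv.tendsto_atTop
    have hL : (fun _ => p + 1) ~[𝓝[<] T] fun t => p + 1 + a / log (v t) :=
      ((isEquivalent_const_iff_tendsto (by linarith)).2 hlim).symm
    refine (((IsEquivalent.refl (u := fun t => 2 / (p + 1) * deriv v t)).mul hN).mul
      hL).congr_left ?_ |>.congr_right ?_
    · filter_upwards with t
      simp only [Pi.mul_apply, Function.comp_apply]
      field_simp
    · filter_upwards with t
      simp only [Pi.mul_apply, Function.comp_apply]
      rw [Real.rpow_add_one two_ne_zero]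
      ring
  refine isEquivalent_nhdsLT_of_hasDerivAt hf hg (hequiv.symm.eventually_pos ?_) ?_ hequiv
  · filter_upwards [hv.eventually_deriv_pos, hv.tendsto_atTop.eventually_gt_atTop 0] with t h1 h2
    have := nonlinearity_pos p a h2
    positivity
  · exact ((tendsto_rpow_mul_log_rpow_atTop a (by linarith)).comp hv.tendsto_atTop).const_mul_atTop
      (by positivity)

theorem deriv_isEquivalent (hp : 1 < p) (hv : IsBlowupSolution p a T v) :
    deriv v ~[𝓝[<] T] fun t => (2 ^ (a + 1) / (p + 1)) ^ (1 / 2 : ℝ) *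
      (v t ^ ((p + 1) / 2) * log (v t) ^ (a / 2)) := by
  have hv1 := hv.tendsto_atTop.eventually_gt_atTop 1
  refine (((hv.deriv_sq_isEquivalent hp).rpow_of_eventually_nonneg ?_ (1 / 2)).congr_left
    ?_).congr_right ?_
  · filter_upwards [hv1] with t h1
    have := Real.log_pos h1
    positivity
  · filter_upwards [hv.eventually_deriv_pos] with t ht
    rw [← Real.sqrt_eq_rpow, Real.sqrt_sq ht.le]
  · filter_upwards [hv1] with t h1
    have h0 : 0 < v t := one_pos.trans h1
    have hlog := Real.log_pos h1
    rw [Real.mul_rpow (by positivity) (by positivity), Real.mul_rpow (by positivity)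
      (by positivity), ← Real.rpow_mul h0.le, ← Real.rpow_mul hlog.le]
    ring_nf

theorem tendsto_neg_deriv_rpow_neg_mul_log_rpow_neg (hp : 1 < p)
    (hv : IsBlowupSolution p a T v) :
    Tendsto (fun t => -(v t ^ (-((p - 1) / 2) - 1) * log (v t) ^ (-(a / 2)) *
        (-((p - 1) / 2) + -(a / 2) / log (v t)) * deriv v t)) (𝓝[<] T)
      (𝓝 ((p - 1) / 2 * (2 ^ (a + 1) / (p + 1)) ^ (1 / 2 : ℝ))) := by
  set k : ℝ := (2 ^ (a + 1) / (p + 1)) ^ (1 / 2 : ℝ)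
  have hlim : Tendsto (fun t => k * ((p - 1) / 2 + a / 2 / log (v t))) (𝓝[<] T)
      (𝓝 ((p - 1) / 2 * k)) := by
    simpa [mul_comm] using (tendsto_const_nhds.add
      (tendsto_const_nhds.div_atTop (Real.tendsto_log_atTop.comp hv.tendsto_atTop))).const_mul k
  refine ((((IsEquivalent.refl (u := fun t => -(v t ^ (-((p - 1) / 2) - 1) *
    log (v t) ^ (-(a / 2)) * (-((p - 1) / 2) + -(a / 2) / log (v t))))).mul
    (hv.deriv_isEquivalent hp)).congr_left ?_).congr_right ?_).symm.tendsto_nhds hlim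
  · filter_upwards with t
    simp only [Pi.mul_apply]
    ring
  · filter_upwards [hv.tendsto_atTop.eventually_gt_atTop 1] with t h1
    have hlog := Real.log_pos h1
    simp only [Pi.mul_apply]
    have e1 : v t ^ (-((p - 1) / 2) - 1) * v t ^ ((p + 1) / 2) = 1 := by
      rw [← Real.rpow_add (one_pos.trans h1)]; ring_nf; exact Real.rpow_zero _
    have e2 : log (v t) ^ (-(a / 2)) * log (v t) ^ (a / 2) = 1 := by
      rw [← Real.rpow_add hlog]; ring_nf; exact Real.rpow_zero _
    linear_combination k * ((p - 1) / 2 + a / 2 / log (v t)) *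
      (log (v t) ^ (-(a / 2)) * log (v t) ^ (a / 2) * e1 + e2)

theorem rpow_neg_mul_log_rpow_neg_isEquivalent (hp : 1 < p)
    (hv : IsBlowupSolution p a T v) :
    (fun t => v t ^ (-((p - 1) / 2)) * log (v t) ^ (-(a / 2))) ~[𝓝[<] T]
      fun t => (p - 1) / 2 * (2 ^ (a + 1) / (p + 1)) ^ (1 / 2 : ℝ) * (T - t) := by
  set c : ℝ := (p - 1) / 2 * (2 ^ (a + 1) / (p + 1)) ^ (1 / 2 : ℝ)
  have hdiv : Tendsto (fun t => v t ^ (-((p - 1) / 2)) * log (v t) ^ (-(a / 2)) / (T - t))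
      (𝓝[<] T) (𝓝 c) := by
    refine HasDerivAt.lhopital_zero_nhdsLT (g' := fun _ => -1)
      (f' := fun t => v t ^ (-((p - 1) / 2) - 1) * log (v t) ^ (-(a / 2)) *
        (-((p - 1) / 2) + -(a / 2) / log (v t)) * deriv v t) ?_ ?_ (by simp) ?_ ?_ ?_
    · filter_upwards [hv.ode, hv.tendsto_atTop.eventually_gt_atTop 1] with t ht h1
      exact (hasDerivAt_rpow_mul_log_rpow _ _ h1).comp t ht.1
    · filter_upwards with t
      simpa using (hasDerivAt_id t).const_sub T
    · exact (tendsto_rpow_neg_mul_log_rpow_atTop _ (by linarith)).comp hv.tendsto_atTop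
    · exact ((continuous_const.sub continuous_id).tendsto' T 0 (sub_self T)).mono_left
        nhdsWithin_le_nhds
    · exact (hv.tendsto_neg_deriv_rpow_neg_mul_log_rpow_neg hp).congr fun t => by
        rw [div_neg, div_one]
  have hc : c ≠ 0 := (mul_pos (by linarith) (by positivity)).ne'
  refine isEquivalent_of_tendsto_one ?_
  have := hdiv.div_const c
  rw [div_self hc] at this
  refine this.congr' (Eventually.of_forall fun t => ?_)
  rw [Pi.div_apply, div_div, mul_comm (T - t)]

end IsBlowupSolution

theorem isEquivalent_of_rpow_mul_log_rpow_isEquivalent {α : Type*} {l : Filter α}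
    {u X : α → ℝ} {q r : ℝ} (hq : 0 < q) (hu : Tendsto u l atTop) (hX : Tendsto X l atTop)
    (h : (fun x => u x ^ q * log (u x) ^ r) ~[l] X) :
    u ~[l] fun x => X x ^ q⁻¹ * (log (X x) / q) ^ (-r / q) := by
  have hu1 := hu.eventually_gt_atTop 1
  have hX1 := hX.eventually_gt_atTop 1
  have hlogu := Real.tendsto_log_atTop.comp hu
  have hlog : (fun x => log (u x)) ~[l] fun x => log (X x) / q := by
    have hsum : (fun x => q * log (u x) + r * log (log (u x))) ~[l]
        fun x => log (X x) := by
      refine (h.log hX).congr_left ?_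
      filter_upwards [hu1] with x hx
      have hlog := Real.log_pos hx
      rw [Real.log_mul (by positivity) (by positivity), Real.log_rpow (one_pos.trans hx),
        Real.log_rpow hlog]
    have hloglog : (fun x => r * log (log (u x))) =o[l]
        fun x => q * log (u x) :=
      ((Real.isLittleO_log_id_atTop.comp_tendsto hlogu).const_mul_left r).const_mul_right hq.ne'
    refine ((IsEquivalent.refl.add_isLittleO hloglog).symm.trans hsum).div
      (IsEquivalent.refl (u := fun _ => q)) |>.congr_left ?_
    filter_upwards with x
    simp only [Pi.div_apply]
    field_simp
  have hpow : (fun x => u x ^ q) ~[l] fun x => X x / (log (X x) / q) ^ r := by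
    refine (h.div (hlog.rpow_of_eventually_nonneg ?_ r)).congr_left ?_
    · filter_upwards [hX1] with x hx
      exact div_nonneg (Real.log_nonneg hx.le) hq.le
    · filter_upwards [hu1] with x hx
      have := Real.log_pos hx
      simp only [Pi.div_apply]
      field_simp
  refine ((hpow.rpow_of_eventually_nonneg ?_ q⁻¹).congr_left ?_).congr_right ?_
  · filter_upwards [hX1] with x hx
    have := Real.log_pos hx
    positivity
  · filter_upwards [hu1] with x hx
    rw [← Real.rpow_mul (one_pos.trans hx).le, mul_inv_cancel₀ hq.ne', Real.rpow_one]
  · filter_upwards [hX1] with x hx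
    have := Real.log_pos hx
    have hM : 0 ≤ log (X x) / q := by positivity
    rw [Real.div_rpow (by positivity) (by positivity), ← Real.rpow_mul hM, neg_div,
      Real.rpow_neg hM, ← div_eq_mul_inv r q]
    exact div_eq_mul_inv _ _

theorem isEquivalent_of_rpow_neg_mul_log_rpow_neg_isEquivalent {α : Type*} {l : Filter α}
    {u τ : α → ℝ} {c q r : ℝ} (hc : 0 < c) (hq : 0 < q) (hu : Tendsto u l atTop)
    (hτ : Tendsto τ l (𝓝[>] 0))
    (h : (fun x => u x ^ (-q) * log (u x) ^ (-r)) ~[l] fun x => c * τ x) :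
    u ~[l] fun x => c ^ (-q⁻¹) * q ^ (r / q) * τ x ^ (-q⁻¹) * |log (τ x)| ^ (-r / q) := by
  have hτ0 : ∀ᶠ x in l, 0 < τ x := hτ self_mem_nhdsWithin
  have hτ1 : ∀ᶠ x in l, τ x < 1 := (tendsto_nhds_of_tendsto_nhdsWithin hτ).eventually
    (gt_mem_nhds one_pos)
  have hcτ : Tendsto (fun x => c * τ x) l (𝓝[>] 0) := by
    refine tendsto_nhdsWithin_iff.2 ⟨?_, hτ0.mono fun x hx => mul_pos hc hx⟩
    simpa using (tendsto_nhds_of_tendsto_nhdsWithin hτ).const_mul c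
  have hlogτ : Tendsto (fun x => -log (τ x)) l atTop :=
    tendsto_neg_atBot_atTop.comp (Real.tendsto_log_nhdsGT_zero.comp hτ)
  refine (isEquivalent_of_rpow_mul_log_rpow_isEquivalent (r := r) hq hu
    (tendsto_inv_nhdsGT_zero.comp hcτ) ?_).trans ?_
  · refine h.inv.congr_left ?_
    filter_upwards [hu.eventually_gt_atTop 1] with x hx
    have := Real.log_pos hx
    simp only [Pi.inv_apply]
    rw [mul_inv, Real.rpow_neg (by positivity), Real.rpow_neg (by positivity), inv_inv, inv_inv]
  have hlog : (fun x => log (c * τ x)⁻¹ / q) ~[l] fun x => |log (τ x)| / q := by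
    refine ((IsEquivalent.refl.const_add_of_norm_tendsto_atTop (c := -log c)
      (tendsto_norm_atTop_atTop.comp hlogτ)).div (IsEquivalent.refl (u := fun _ => q))).congr_left
      ?_ |>.congr_right ?_
    · filter_upwards [hτ0] with x hx
      simp only [Pi.div_apply]
      rw [Real.log_inv, Real.log_mul hc.ne' hx.ne']
      ring
    · filter_upwards [hτ0, hτ1] with x h0 h1
      simp only [Pi.div_apply]
      rw [abs_of_neg (Real.log_neg h0 h1)]
  refine ((IsEquivalent.refl (u := fun x => (c * τ x)⁻¹ ^ q⁻¹)).mul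
    (hlog.rpow_of_eventually_nonneg ?_ (-r / q))).congr_right ?_
  · filter_upwards with x
    positivity
  · filter_upwards [hτ0] with x hx
    simp only [Pi.mul_apply]
    rw [Real.div_rpow (abs_nonneg _) hq.le, Real.inv_rpow (by positivity),
      Real.mul_rpow hc.le hx.le, Real.rpow_neg hc.le, Real.rpow_neg hx.le, neg_div,
      Real.rpow_neg hq.le (r / q), div_inv_eq_mul]
    ring

theorem blowup_constant_eq {p : ℝ} (a : ℝ) (hp : 1 < p) :
    ((p - 1) / 2 * (2 ^ (a + 1) / (p + 1)) ^ (1 / 2 : ℝ)) ^ (-2 / (p - 1)) *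
        ((p - 1) / 2) ^ (a / (p - 1)) =
      ((2 : ℝ) ^ (1 - 2 * a) * (p + 1) / (p - 1) ^ (2 - a)) ^ (1 / (p - 1)) := by
  have hp1 : 0 < p - 1 := by linarith
  have hp2 : 0 < p + 1 := by linarith
  have hK : 0 ≤ (2 : ℝ) ^ (a + 1) / (p + 1) := by positivity
  rw [show -2 / (p - 1) = -2 * (1 / (p - 1)) by ring, show a / (p - 1) = a * (1 / (p - 1)) by ring,
    Real.rpow_mul (by positivity), Real.rpow_mul (by positivity),
    ← Real.mul_rpow (by positivity) (by positivity)]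
  congr 1
  rw [Real.mul_rpow (by positivity) (by positivity), ← Real.rpow_mul hK,
    show (1 / 2 : ℝ) * -2 = -1 by norm_num, Real.rpow_neg_one,
    Real.div_rpow hp1.le zero_le_two, Real.div_rpow hp1.le zero_le_two,
    Real.rpow_sub two_pos, Real.rpow_sub hp1, Real.rpow_add two_pos,
    Real.rpow_neg hp1.le, Real.rpow_neg zero_le_two, mul_comm 2 a, Real.rpow_mul zero_le_two]
  simp only [Real.rpow_two, Real.rpow_one]
  field_simp

theorem stmt11_general (p a T : ℝ) (hp : 1 < p) (hT : 0 < T)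
    (v : ℝ → ℝ)
    (hv : ∀ t ∈ Ico (0:ℝ) T, HasDerivAt v (deriv v t) t)
    (hv' : ∀ t ∈ Ico (0:ℝ) T,
      HasDerivAt (deriv v) (|v t| ^ (p - 1) * v t * (Real.log (2 + (v t) ^ 2)) ^ a) t)
    (hblow : Tendsto v (nhdsWithin T (Iio T)) atTop) :
    Tendsto (fun t : ℝ => v t /
        (((2 : ℝ) ^ (1 - 2 * a) * (p + 1) / (p - 1) ^ (2 - a)) ^ (1 / (p - 1)) *
          (T - t) ^ (-2 / (p - 1)) * |Real.log (T - t)| ^ (-a / (p - 1))))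
      (nhdsWithin T (Iio T)) (nhds 1) := by
  have hsol : IsBlowupSolution p a T v := by
    refine ⟨?_, hblow⟩
    filter_upwards [Ioo_mem_nhdsLT hT] with t ht
    exact ⟨hv t ⟨ht.1.le, ht.2⟩, hv' t ⟨ht.1.le, ht.2⟩⟩
  have hτ : ∀ᶠ t in 𝓝[<] T, T - t ∈ Ioo 0 1 := by
    filter_upwards [Ioo_mem_nhdsLT (sub_one_lt T)] with t ht
    constructor <;> linarith [ht.1, ht.2]
  have hτ0 : Tendsto (fun t => T - t) (𝓝[<] T) (𝓝[>] 0) :=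
    tendsto_nhdsWithin_iff.2 ⟨((continuous_const.sub continuous_id).tendsto' T 0
      (sub_self T)).mono_left nhdsWithin_le_nhds, hτ.mono fun _ h => h.1⟩
  have hequiv := isEquivalent_of_rpow_neg_mul_log_rpow_neg_isEquivalent
    (mul_pos (by linarith) (by positivity)) (by linarith) hblow hτ0
    (hsol.rpow_neg_mul_log_rpow_neg_isEquivalent hp)
  rw [show -((p - 1) / 2)⁻¹ = -2 / (p - 1) by field_simp,
    show a / 2 / ((p - 1) / 2) = a / (p - 1) by field_simp,
    show -(a / 2) / ((p - 1) / 2) = -a / (p - 1) by field_simp, blowup_constant_eq a hp] at hequiv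
  refine (isEquivalent_iff_tendsto_one ?_).1 hequiv
  filter_upwards [hτ] with t ht
  have := abs_pos.2 (Real.log_neg ht.1 ht.2).ne
  have := ht.1
  positivity

theorem stmt11 (p a A B T : ℝ) (hp : 1 < p) (hA : 0 < A) (hB : 0 < B) (hT : 0 < T)
    (v : ℝ → ℝ) (hv0 : v 0 = A) (hv0' : deriv v 0 = B)
    (hv : ∀ t ∈ Ico (0:ℝ) T, HasDerivAt v (deriv v t) t)
    (hv' : ∀ t ∈ Ico (0:ℝ) T,
      HasDerivAt (deriv v) (|v t| ^ (p - 1) * v t * (Real.log (2 + (v t) ^ 2)) ^ a) t)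
    (hblow : Tendsto v (nhdsWithin T (Iio T)) atTop) :
    Tendsto (fun t : ℝ => v t /
        (((2 : ℝ) ^ (1 - 2 * a) * (p + 1) / (p - 1) ^ (2 - a)) ^ (1 / (p - 1)) *
          (T - t) ^ (-2 / (p - 1)) * |Real.log (T - t)| ^ (-a / (p - 1))))
      (nhdsWithin T (Iio T)) (nhds 1) :=
  stmt11_general p a T hp hT v hv hv' hblow
end

section
/- Let p > 1, a ∈ ℝ, f(u) = |u|^{p-1}u log^a(2+u²), F its antiderivative vanishing at 0, and φ(s) = e^{2s/(p−1)} s^{−a/(p−1)}. Then there exists C > 0 such that for all s ≥ 1 and z ∈ ℝ: C^{−1} φ(s) z f(φ(s) z) ≤ C + F(φ(s) z) ≤ C (1 + φ(s) z f(φ(s) z)). -/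
open Real


private lemma key_ratio (p b : ℝ) (hp : 0 < p) (hb : 0 ≤ b) {u v : ℝ} (hv : 0 < v) (hvu : v ≤ u) :
    (Real.log (2 + u^2) / Real.log (2 + v^2)) ^ b
      ≤ (1 + 2*b/(p*Real.log 2)) ^ b * (u/v) ^ p := by
  have hu : 0 < u := hv.trans_le hvu
  have hlog2 : 0 < Real.log 2 := Real.log_pos (by norm_num)
  have hLv : 0 < Real.log (2 + v^2) := Real.log_pos (by nlinarith)
  have hLu : 0 < Real.log (2 + u^2) := Real.log_pos (by nlinarith)
  have hLv2 : Real.log 2 ≤ Real.log (2 + v^2) := Real.log_le_log (by norm_num) (by nlinarith)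
  set t := Real.log (u/v) with ht_def
  have ht : 0 ≤ t := Real.log_nonneg ((one_le_div hv).2 hvu)
  -- step 1 : log(2+u^2) ≤ log(2+v^2) + 2 t
  have step1 : Real.log (2 + u^2) ≤ Real.log (2 + v^2) + 2 * t := by
    have h1 : (2 + u^2) ≤ (2 + v^2) * (u/v)^2 := by
      rw [div_pow]
      rw [show (2 + v^2) * (u^2/v^2) = (2 + v^2) * u^2 / v^2 by ring, le_div_iff₀ (by positivity)]
      nlinarith
    calc Real.log (2 + u^2) ≤ Real.log ((2 + v^2) * (u/v)^2) :=
          Real.log_le_log (by nlinarith) h1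
      _ = Real.log (2 + v^2) + 2 * t := by
          rw [Real.log_mul (by nlinarith) (by positivity), Real.log_pow]
          push_cast; ring
  -- step 2 : ratio bound
  have step2 : Real.log (2 + u^2) / Real.log (2 + v^2) ≤ 1 + 2 * t / Real.log 2 := by
    rw [div_le_iff₀ hLv]
    have h2 : 2 * t / Real.log 2 * Real.log (2 + v^2) ≥ 2 * t := by
      rw [ge_iff_le, div_mul_eq_mul_div, le_div_iff₀ hlog2]
      nlinarith
    nlinarith
  rcases eq_or_lt_of_le hb with hb0 | hb0
  · -- b = 0
    rw [← hb0, Real.rpow_zero, Real.rpow_zero, one_mul]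
    calc (1:ℝ) = 1 ^ p := (Real.one_rpow p).symm
      _ ≤ (u/v) ^ p := Real.rpow_le_rpow zero_le_one ((one_le_div hv).2 hvu) hp.le
  · -- b > 0
    have hK : 0 ≤ 2*b/(p*Real.log 2) := by positivity
    have step3 : 1 + 2 * t / Real.log 2 ≤ (1 + 2*b/(p*Real.log 2)) * Real.exp (p/b * t) := by
      have he1 : p/b * t ≤ Real.exp (p/b * t) := by
        have := Real.add_one_le_exp (p/b * t); linarith
      have he2 : (1:ℝ) ≤ Real.exp (p/b * t) := Real.one_le_exp (by positivity)
      have heq : 2 * t / Real.log 2 = (2*b/(p*Real.log 2)) * (p/b * t) := by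
        field_simp
      rw [heq]
      nlinarith [mul_le_mul_of_nonneg_left he1 hK]
    have hratio_nonneg : 0 ≤ Real.log (2 + u^2) / Real.log (2 + v^2) := by positivity
    calc (Real.log (2 + u^2) / Real.log (2 + v^2)) ^ b
        ≤ ((1 + 2*b/(p*Real.log 2)) * Real.exp (p/b * t)) ^ b :=
          Real.rpow_le_rpow hratio_nonneg (step2.trans step3) hb
      _ = (1 + 2*b/(p*Real.log 2)) ^ b * (Real.exp (p/b * t)) ^ b :=
          Real.mul_rpow (by linarith) (Real.exp_nonneg _)
      _ = (1 + 2*b/(p*Real.log 2)) ^ b * (u/v) ^ p := by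
          congr 1
          rw [Real.rpow_def_of_pos (Real.exp_pos _), Real.log_exp,
            Real.rpow_def_of_pos (div_pos hu hv)]
          congr 1
          field_simp
          ring


private lemma pointwise_bnd (p a : ℝ) (hp : 0 < p) {u v : ℝ} (hv : 0 < v) (hvu : v ≤ u)
    (hkey : (Real.log (2 + u^2) / Real.log (2 + v^2)) ^ |a|
      ≤ (1 + 2*|a|/(p*Real.log 2)) ^ |a| * (u/v) ^ p) :
    Real.log (2+v^2) ^ a ≤ (1 + 2*|a|/(p*Real.log 2)) ^ |a| * (u/v)^p * Real.log (2+u^2) ^ a ∧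
    ((1 + 2*|a|/(p*Real.log 2)) ^ |a|)⁻¹ * (v/u)^p * Real.log (2+u^2) ^ a
      ≤ Real.log (2+v^2) ^ a := by
  have hu : 0 < u := hv.trans_le hvu
  have hLv : 0 < Real.log (2 + v^2) := Real.log_pos (by nlinarith)
  have hLu : 0 < Real.log (2 + u^2) := Real.log_pos (by nlinarith)
  have hLvu : Real.log (2 + v^2) ≤ Real.log (2 + u^2) :=
    Real.log_le_log (by nlinarith) (by nlinarith)
  set x := Real.log (2 + v^2) / Real.log (2 + u^2) with hx_def
  have hx0 : 0 < x := div_pos hLv hLu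
  have hx1 : x ≤ 1 := (div_le_one hLu).2 hLvu
  have hxmul : x * Real.log (2 + u^2) = Real.log (2 + v^2) := div_mul_cancel₀ _ hLu.ne'
  have hLva : Real.log (2 + v^2) ^ a = x ^ a * Real.log (2 + u^2) ^ a := by
    rw [← Real.mul_rpow hx0.le hLu.le, hxmul]
  have hxinv : (Real.log (2 + u^2) / Real.log (2 + v^2)) ^ |a| = (x ^ |a|)⁻¹ := by
    rw [← inv_div (Real.log (2 + v^2)), Real.inv_rpow hx0.le]
  have hxa_le : x ^ a ≤ (x ^ |a|)⁻¹ := by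
    rw [← Real.rpow_neg hx0.le]
    exact Real.rpow_le_rpow_of_exponent_ge hx0 hx1 (neg_abs_le a)
  have hxa_ge : x ^ |a| ≤ x ^ a :=
    Real.rpow_le_rpow_of_exponent_ge hx0 hx1 (le_abs_self a)
  rw [hxinv] at hkey
  constructor
  · rw [hLva]
    have : x ^ a ≤ (1 + 2*|a|/(p*Real.log 2)) ^ |a| * (u/v) ^ p := by
      calc x ^ a ≤ (x ^ |a|)⁻¹ := hxa_le
        _ ≤ (1 + 2*|a|/(p*Real.log 2)) ^ |a| * (u/v) ^ p := hkey
    exact mul_le_mul_of_nonneg_right this (Real.rpow_pos_of_pos hLu a).le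
  · rw [hLva]
    have hMp : 0 < (1 + 2*|a|/(p*Real.log 2)) ^ |a| * (u/v) ^ p := by
      have h2 : (0:ℝ) < Real.log 2 := Real.log_pos (by norm_num)
      positivity
    have hxp : 0 < x ^ |a| := Real.rpow_pos_of_pos hx0 _
    have hinv : (((1 + 2*|a|/(p*Real.log 2)) ^ |a| * (u/v) ^ p))⁻¹ ≤ x ^ |a| := by
      rw [← inv_inv (x ^ |a|)]
      exact inv_anti₀ (by positivity) hkey
    have heq : (((1 + 2*|a|/(p*Real.log 2)) ^ |a| * (u/v) ^ p))⁻¹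
        = ((1 + 2*|a|/(p*Real.log 2)) ^ |a|)⁻¹ * (v/u) ^ p := by
      have h3 : ((u/v : ℝ) ^ p)⁻¹ = (v/u) ^ p := by
        rw [← Real.inv_rpow (by positivity), inv_div]
      rw [mul_inv, h3]
    have : ((1 + 2*|a|/(p*Real.log 2)) ^ |a|)⁻¹ * (v/u) ^ p ≤ x ^ a := by
      rw [← heq]; exact hinv.trans hxa_ge
    exact mul_le_mul_of_nonneg_right this (Real.rpow_pos_of_pos hLu a).le


private lemma F_bounds (p a : ℝ) (hp : 1 < p)
    (pointwise_bnd : ∀ {u v : ℝ}, 0 < v → v ≤ u →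
      Real.log (2+v^2) ^ a ≤ (1 + 2*|a|/(p*Real.log 2)) ^ |a| * (u/v)^p * Real.log (2+u^2) ^ a ∧
      ((1 + 2*|a|/(p*Real.log 2)) ^ |a|)⁻¹ * (v/u)^p * Real.log (2+u^2) ^ a
        ≤ Real.log (2+v^2) ^ a)
    {u : ℝ} (hu : 0 < u) :
    ((1 + 2*|a|/(p*Real.log 2)) ^ |a|)⁻¹ / (2*p+1) * (u ^ (p+1) * Real.log (2+u^2) ^ a)
      ≤ (∫ v in (0:ℝ)..u, |v| ^ (p-1) * v * Real.log (2+v^2) ^ a) ∧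
    (∫ v in (0:ℝ)..u, |v| ^ (p-1) * v * Real.log (2+v^2) ^ a)
      ≤ (1 + 2*|a|/(p*Real.log 2)) ^ |a| * (u ^ (p+1) * Real.log (2+u^2) ^ a) := by
  have hp0 : 0 < p := by linarith
  have hlog2 : 0 < Real.log 2 := Real.log_pos (by norm_num)
  set M := (1 + 2*|a|/(p*Real.log 2)) ^ |a| with hM_def
  have hM1 : 1 ≤ M := Real.one_le_rpow (le_add_of_nonneg_right (by positivity)) (abs_nonneg a)
  have hM0 : 0 < M := lt_of_lt_of_le one_pos hM1
  set Lu := Real.log (2 + u^2) with hLu_def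
  have hLu : 0 < Lu := Real.log_pos (by nlinarith)
  have hLua : 0 < Lu ^ a := Real.rpow_pos_of_pos hLu a
  have hup : 0 < u ^ p := Real.rpow_pos_of_pos hu p
  -- continuity of integrand
  have hfc : Continuous fun v : ℝ => |v| ^ (p-1) * v * Real.log (2+v^2) ^ a := by
    apply Continuous.mul
    · exact (continuous_abs.rpow_const fun x => Or.inr (by linarith)).mul continuous_id
    · apply Continuous.rpow_const
      · apply Continuous.log
        · exact continuous_const.add (continuous_pow 2)
        · intro x; nlinarith [sq_nonneg x]
      · intro x; exact Or.inl (ne_of_gt (Real.log_pos (by nlinarith [sq_nonneg x])))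
  -- rewriting the integrand for positive v
  have hfval : ∀ v : ℝ, 0 < v → |v| ^ (p-1) * v * Real.log (2+v^2) ^ a
      = v ^ p * Real.log (2+v^2) ^ a := by
    intro v hv
    rw [abs_of_pos hv]
    congr 1
    rw [← Real.rpow_add_one hv.ne' (p-1)]
    norm_num
  constructor
  · -- lower bound
    have hcont : Continuous fun v : ℝ => M⁻¹ * (u^p)⁻¹ * Lu ^ a * v ^ (2*p) := by
      apply continuous_const.mul
      exact continuous_iff_continuousAt.2 fun x =>
        Real.continuousAt_rpow_const x (2*p) (Or.inr (by positivity))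
    have hpt : ∀ v ∈ Set.Icc (0:ℝ) u,
        M⁻¹ * (u^p)⁻¹ * Lu ^ a * v ^ (2*p) ≤ |v| ^ (p-1) * v * Real.log (2+v^2) ^ a := by
      rintro v ⟨hv0, hvu⟩
      rcases eq_or_lt_of_le hv0 with h0 | hv
      · rw [← h0]
        rw [Real.zero_rpow (by positivity)]
        simp
      · rw [hfval v hv]
        have key := (pointwise_bnd hv hvu).2
        have hvp : 0 < v ^ p := Real.rpow_pos_of_pos hv p
        have h2p : v ^ (2*p) = v ^ p * v ^ p := by
          rw [show 2*p = p + p by ring, Real.rpow_add hv]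
        have hdiv : (v/u) ^ p = v ^ p * (u^p)⁻¹ := by
          rw [Real.div_rpow hv0 hu.le, div_eq_mul_inv]
        calc M⁻¹ * (u^p)⁻¹ * Lu ^ a * v ^ (2*p)
            = (M⁻¹ * (v/u)^p * Lu ^ a) * v ^ p := by rw [h2p, hdiv]; ring
          _ ≤ Real.log (2+v^2) ^ a * v ^ p := mul_le_mul_of_nonneg_right key hvp.le
          _ = v ^ p * Real.log (2+v^2) ^ a := by ring
    have hint := intervalIntegral.integral_mono_on (μ := MeasureTheory.volume) hu.le
      (hcont.intervalIntegrable 0 u) (hfc.intervalIntegrable 0 u) hpt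
    have hval : (∫ v in (0:ℝ)..u, M⁻¹ * (u^p)⁻¹ * Lu ^ a * v ^ (2*p))
        = M⁻¹ / (2*p+1) * (u ^ (p+1) * Lu ^ a) := by
      rw [intervalIntegral.integral_const_mul, integral_rpow (Or.inl (by linarith)),
        Real.zero_rpow (by positivity)]
      have h1 : u ^ (2*p+1) = u ^ p * u ^ (p+1) := by
        rw [← Real.rpow_add hu]; ring_nf
      rw [h1]
      field_simp
      ring
    rw [← hval]; exact hint
  · -- upper bound
    have hpt : ∀ v ∈ Set.Icc (0:ℝ) u,
        |v| ^ (p-1) * v * Real.log (2+v^2) ^ a ≤ M * u ^ p * Lu ^ a := by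
      rintro v ⟨hv0, hvu⟩
      rcases eq_or_lt_of_le hv0 with h0 | hv
      · rw [← h0]; simp; positivity
      · rw [hfval v hv]
        have key := (pointwise_bnd hv hvu).1
        have hvp : 0 < v ^ p := Real.rpow_pos_of_pos hv p
        have hmul : v ^ p * (u/v) ^ p = u ^ p := by
          rw [← Real.mul_rpow hv0 (by positivity), mul_comm, div_mul_cancel₀ u hv.ne']
        calc v ^ p * Real.log (2+v^2) ^ a
            ≤ v ^ p * (M * (u/v)^p * Lu ^ a) := mul_le_mul_of_nonneg_left key hvp.le
          _ = M * (v ^ p * (u/v)^p) * Lu ^ a := by ring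
          _ = M * u ^ p * Lu ^ a := by rw [hmul]
    have hint := intervalIntegral.integral_mono_on (μ := MeasureTheory.volume) hu.le
      (hfc.intervalIntegrable 0 u) (intervalIntegrable_const) hpt
    have hval : (∫ _ in (0:ℝ)..u, M * u ^ p * Lu ^ a) = M * (u ^ (p+1) * Lu ^ a) := by
      rw [intervalIntegral.integral_const, smul_eq_mul]
      rw [Real.rpow_add_one hu.ne' p]
      ring
    rw [← hval]; exact hint

theorem stmt14 (p a : ℝ) (hp : 1 < p)
    (f : ℝ → ℝ) (hf : ∀ u, f u = |u| ^ (p - 1) * u * (Real.log (2 + u ^ 2)) ^ a)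
    (F : ℝ → ℝ) (hF : ∀ u, F u = ∫ v in (0:ℝ)..u, f v)
    (φ : ℝ → ℝ) (hφ : ∀ s, φ s = Real.exp (2 * s / (p - 1)) * s ^ (-a / (p - 1))) :
    ∃ C > 0, ∀ s ≥ (1:ℝ), ∀ z : ℝ,
      C⁻¹ * (φ s * z * f (φ s * z)) ≤ C + F (φ s * z) ∧
      C + F (φ s * z) ≤ C * (1 + φ s * z * f (φ s * z)) := by
  have hp0 : 0 < p := by linarith
  have hlog2 : 0 < Real.log 2 := Real.log_pos (by norm_num)
  set M := (1 + 2*|a|/(p*Real.log 2)) ^ |a| with hM_def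
  have hM1 : 1 ≤ M := Real.one_le_rpow (le_add_of_nonneg_right (by positivity)) (abs_nonneg a)
  have hM0 : 0 < M := lt_of_lt_of_le one_pos hM1
  have hpw : ∀ {u v : ℝ}, 0 < v → v ≤ u →
      Real.log (2+v^2) ^ a ≤ M * (u/v)^p * Real.log (2+u^2) ^ a ∧
      M⁻¹ * (v/u)^p * Real.log (2+u^2) ^ a ≤ Real.log (2+v^2) ^ a := by
    intro u v hv hvu
    exact pointwise_bnd p a hp0 hv hvu (key_ratio p |a| hp0 (abs_nonneg a) hv hvu)
  -- oddness of f
  have hodd : ∀ x : ℝ, f (-x) = - f x := by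
    intro x
    rw [hf, hf]
    rw [abs_neg, neg_sq]
    ring
  refine ⟨M * (2*p+1), by positivity, ?_⟩
  intro s _ z
  set w := φ s * z with hw_def
  set u := |w| with hu_def
  have hu0 : 0 ≤ u := abs_nonneg w
  have hw2 : w^2 = u^2 := (sq_abs w).symm
  -- w * f w = u ^ (p+1) * log(2+u^2)^a
  have hwf : w * f w = u ^ (p+1) * Real.log (2+u^2) ^ a := by
    rw [hf]
    rcases eq_or_lt_of_le hu0 with h0 | hu
    · have hw0 : w = 0 := abs_eq_zero.1 h0.symm
      rw [hw0, ← h0, Real.zero_rpow (by positivity)]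
      ring
    · have : |w| ^ (p-1) * w^2 = u ^ (p+1) := by
        rw [hw2, ← hu_def, ← Real.rpow_natCast u 2, ← Real.rpow_add hu]
        norm_num
        congr 1
        ring
      calc w * (|w| ^ (p - 1) * w * Real.log (2 + w ^ 2) ^ a)
          = (|w| ^ (p-1) * w^2) * Real.log (2 + w^2) ^ a := by ring
        _ = u ^ (p+1) * Real.log (2+u^2) ^ a := by rw [this, hw2]
  -- F w = explicit integral over [0, u]
  have hFw : F w = ∫ v in (0:ℝ)..u, |v| ^ (p-1) * v * Real.log (2+v^2) ^ a := by
    rcases le_or_gt 0 w with hw0 | hw0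
    · rw [hF, show u = w from abs_of_nonneg hw0]
      simp only [hf]
    · have hneg : u = -w := abs_of_neg hw0
      have h1 : (∫ x in (0:ℝ)..(-w), f (-x)) = ∫ x in w..(0:ℝ), f x := by
        have := intervalIntegral.integral_comp_neg (a := 0) (b := -w) f
        simpa using this
      have h2 : (∫ x in (0:ℝ)..(-w), f (-x)) = -∫ x in (0:ℝ)..(-w), f x := by
        simp only [hodd]
        exact intervalIntegral.integral_neg
      calc F w = ∫ x in (0:ℝ)..w, f x := hF w
        _ = -∫ x in w..(0:ℝ), f x := intervalIntegral.integral_symm w 0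
        _ = -∫ x in (0:ℝ)..(-w), f (-x) := by rw [h1]
        _ = ∫ x in (0:ℝ)..(-w), f x := by rw [h2, neg_neg]
        _ = ∫ v in (0:ℝ)..u, |v| ^ (p-1) * v * Real.log (2+v^2) ^ a := by
            rw [← hneg]
            simp only [hf]
  set Lua := Real.log (2+u^2) ^ a with hLua_def
  have hG0 : 0 ≤ u ^ (p+1) * Lua := by
    apply mul_nonneg (Real.rpow_nonneg hu0 _)
    exact (Real.rpow_pos_of_pos (Real.log_pos (by nlinarith)) a).le
  rcases eq_or_lt_of_le hu0 with h0 | hu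
  · -- u = 0
    have hw0 : w = 0 := abs_eq_zero.1 h0.symm
    have hF0 : F w = 0 := by rw [hFw, ← h0, intervalIntegral.integral_same]
    have hwf0 : w * f w = 0 := by rw [hw0]; ring
    rw [hF0, hwf0]
    constructor
    · rw [mul_zero]; positivity
    · norm_num
  · -- u > 0
    obtain ⟨hlow, hupp⟩ := F_bounds p a hp (fun hv hvu => hpw hv hvu) hu
    rw [← hFw] at hlow hupp
    have hC1 : 1 ≤ M * (2*p+1) := by nlinarith
    constructor
    · rw [hwf]
      have h3 : (M * (2*p+1))⁻¹ * (u ^ (p+1) * Lua) = M⁻¹ / (2*p+1) * (u ^ (p+1) * Lua) := by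
        rw [mul_inv]
        ring
      rw [h3]
      have : (0:ℝ) < M * (2*p+1) := by positivity
      linarith
    · rw [hwf]
      have h4 : M * (u ^ (p+1) * Lua) ≤ M * (2*p+1) * (u ^ (p+1) * Lua) := by
        apply mul_le_mul_of_nonneg_right _ hG0
        nlinarith
      nlinarith
end

section
/- For a ∈ ℝ and p > 1, suppose v: [0,T) → (0,∞) is C² with v' > 0 on [0,T), v(t) → ∞ as t → T, and v'(t)/v(t)^{(p+1)/2} ∼ c |log(T−t)|^{a/2} as t → T for some constant c > 0. Then (2/(p−1)) v(t)^{(1−p)/2} ∼ c (T−t)|log(T−t)|^{a/2} as t → T. -/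
/-!
L'Hôpital's rule at `T⁻`. Both sides tend to `0`: `v → ∞` and `p > 1` for the numerator,
`s |log s|^b → 0` as `s → 0⁺` for the denominator. The numerator has derivative
`-v'/v^((p+1)/2)`, the denominator `-c |log (T - t)|^(a/2) (1 + (a/2)/log (T - t))`, and the
correction factor `1 + (a/2)/log (T - t)` tends to `1`, so the ratio of derivatives is the
hypothesis up to a factor tending to `1`.
-/

open Real Set Filter Topology

theorem tendsto_const_sub_nhdsLT (T : ℝ) :
    Tendsto (fun t => T - t) (𝓝[<] T) (𝓝[>] 0) := by
  refine tendsto_nhdsWithin_of_tendsto_nhds_of_eventually_within _ ?_ ?_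
  · simpa using ((continuous_sub_left T).tendsto T).mono_left nhdsWithin_le_nhds
  · filter_upwards [self_mem_nhdsWithin] with t ht using sub_pos.2 (mem_Iio.1 ht)

theorem HasDerivAt.const_mul_rpow_one_sub_div_two {f : ℝ → ℝ} {f' t p : ℝ}
    (hf : HasDerivAt f f' t) (hft : 0 < f t) (hp : p ≠ 1) :
    HasDerivAt (fun x => 2 / (p - 1) * f x ^ ((1 - p) / 2))
      (-(f' / f t ^ ((p + 1) / 2))) t := by
  refine ((hf.rpow_const (Or.inl hft.ne')).const_mul _).congr_deriv ?_
  have hp' : p - 1 ≠ 0 := sub_ne_zero.2 hp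
  rw [show (1 - p) / 2 - 1 = -((p + 1) / 2) by ring, rpow_neg hft.le]
  field_simp
  ring

theorem hasDerivAt_mul_abs_log_rpow {s : ℝ} (hs : s ∈ Ioo 0 1) (b : ℝ) :
    HasDerivAt (fun x => x * |log x| ^ b) (|log s| ^ b * (1 + b / log s)) s := by
  have hlog : 0 < -log s := neg_pos.2 (log_neg hs.1 hs.2)
  have hL : HasDerivAt (fun x => -log x) (-s⁻¹) s := (hasDerivAt_log hs.1.ne').neg
  have heq : (fun x => x * |log x| ^ b) =ᶠ[𝓝 s] fun x => x * (-log x) ^ b := by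
    filter_upwards [isOpen_Ioo.mem_nhds hs] with x hx
    rw [abs_of_neg (log_neg hx.1 hx.2)]
  refine (((hasDerivAt_id' s).mul (hL.rpow_const (Or.inl hlog.ne'))).congr_deriv ?_)
    |>.congr_of_eventuallyEq heq
  rw [abs_of_neg (neg_pos.1 hlog), rpow_sub hlog, rpow_one]
  field_simp [hs.1.ne']

theorem tendsto_mul_abs_log_rpow_nhdsGT_zero (b : ℝ) :
    Tendsto (fun s => s * |log s| ^ b) (𝓝[>] 0) (𝓝 0) := by
  have hL : Tendsto (fun s => -log s) (𝓝[>] 0) atTop :=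
    tendsto_neg_atBot_atTop.comp tendsto_log_nhdsGT_zero
  refine ((tendsto_rpow_mul_exp_neg_mul_atTop_nhds_zero b 1 one_pos).comp hL).congr' ?_
  filter_upwards [Ioo_mem_nhdsGT one_pos] with s hs
  simp only [Function.comp, neg_one_mul, neg_neg, exp_log hs.1, abs_of_neg (log_neg hs.1 hs.2)]
  ring

theorem tendsto_one_add_div_log_nhdsGT_zero (b : ℝ) :
    Tendsto (fun s => 1 + b / log s) (𝓝[>] 0) (𝓝 1) := by
  simpa using tendsto_const_nhds.add (tendsto_const_nhds.div_atBot tendsto_log_nhdsGT_zero)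

theorem stmt18_general (p a T c : ℝ) (hp : 1 < p) (hT : 0 < T) (hc : 0 < c)
    (v : ℝ → ℝ) (hsmooth : ContDiffOn ℝ 2 v (Ico (0:ℝ) T))
    (hblow : Tendsto v (nhdsWithin T (Iio T)) atTop)
    (hequiv : Tendsto (fun t : ℝ =>
        (deriv v t / (v t) ^ ((p + 1) / 2)) / (c * |Real.log (T - t)| ^ (a / 2)))
      (nhdsWithin T (Iio T)) (nhds 1)) :
    Tendsto (fun t : ℝ =>
        ((2 / (p - 1)) * (v t) ^ ((1 - p) / 2)) /
          (c * (T - t) * |Real.log (T - t)| ^ (a / 2)))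
      (nhdsWithin T (Iio T)) (nhds 1) := by
  have hsub := tendsto_const_sub_nhdsLT T
  have hs : ∀ᶠ t in 𝓝[<] T, T - t ∈ Ioo 0 1 := hsub (Ioo_mem_nhdsGT one_pos)
  have hlog : Tendsto (fun t => 1 + a / 2 / log (T - t)) (𝓝[<] T) (𝓝 1) :=
    (tendsto_one_add_div_log_nhdsGT_zero (a / 2)).comp hsub
  have hv : ∀ᶠ t in 𝓝[<] T, HasDerivAt v (deriv v t) t := by
    filter_upwards [Ioo_mem_nhdsLT hT] with t ht
    exact ((hsmooth.contDiffAt (Ico_mem_nhds ht.1 ht.2)).differentiableAt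
      (by norm_num)).hasDerivAt
  have hG : ∀ᶠ t in 𝓝[<] T, HasDerivAt (fun t => c * (T - t) * |log (T - t)| ^ (a / 2))
      (-(c * (|log (T - t)| ^ (a / 2) * (1 + a / 2 / log (T - t))))) t := by
    filter_upwards [hs] with t ht
    have := ((hasDerivAt_mul_abs_log_rpow ht (a / 2)).comp t
      ((hasDerivAt_id' t).const_sub T)).const_mul c
    simpa only [Function.comp_def, mul_assoc, mul_one, mul_neg_one, mul_neg] using this
  have hF : ∀ᶠ t in 𝓝[<] T, HasDerivAt (fun t => 2 / (p - 1) * v t ^ ((1 - p) / 2))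
      (-(deriv v t / v t ^ ((p + 1) / 2))) t := by
    filter_upwards [hv, hblow.eventually_gt_atTop 0] with t hvt hvpos
    exact hvt.const_mul_rpow_one_sub_div_two hvpos hp.ne'
  refine HasDerivAt.lhopital_zero_nhdsLT hF hG ?_ ?_ ?_ ?_
  · filter_upwards [hs, hlog.eventually_ne one_ne_zero] with t ht hne
    have hL : 0 < |log (T - t)| := abs_pos.2 (log_neg ht.1 ht.2).ne
    exact neg_ne_zero.2 (mul_ne_zero hc.ne' (mul_ne_zero (rpow_pos_of_pos hL _).ne' hne))
  · have := ((tendsto_rpow_neg_atTop (by linarith : 0 < (p - 1) / 2)).comp hblow).const_mul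
      (2 / (p - 1))
    simpa only [show (1 - p) / 2 = -((p - 1) / 2) by ring, Function.comp_def, mul_zero] using this
  · simpa only [Function.comp_def, mul_assoc, mul_zero] using
      ((tendsto_mul_abs_log_rpow_nhdsGT_zero (a / 2)).comp hsub).const_mul c
  · simpa only [Pi.div_def, div_one, neg_div_neg_eq, div_div, mul_assoc] using
      hequiv.div hlog one_ne_zero

theorem stmt18 (p a T c : ℝ) (hp : 1 < p) (hT : 0 < T) (hc : 0 < c)
    (v : ℝ → ℝ) (hsmooth : ContDiffOn ℝ 2 v (Ico (0:ℝ) T))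
    (hpos : ∀ t ∈ Ico (0:ℝ) T, 0 < v t)
    (hpos' : ∀ t ∈ Ico (0:ℝ) T, 0 < deriv v t)
    (hblow : Tendsto v (nhdsWithin T (Iio T)) atTop)
    (hequiv : Tendsto (fun t : ℝ =>
        (deriv v t / (v t) ^ ((p + 1) / 2)) / (c * |Real.log (T - t)| ^ (a / 2)))
      (nhdsWithin T (Iio T)) (nhds 1)) :
    Tendsto (fun t : ℝ =>
        ((2 / (p - 1)) * (v t) ^ ((1 - p) / 2)) /
          (c * (T - t) * |Real.log (T - t)| ^ (a / 2)))
      (nhdsWithin T (Iio T)) (nhds 1) :=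
  stmt18_general p a T c hp hT hc v hsmooth hblow hequiv
end
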